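/- arXiv:2012.12869 — 4 statements merged into one kernel-verified Lean document; each statement's English description precedes it below -/
import Mathlib

section
/- For real numbers 0 < a < b, the quantity b + a + (a·b/(b − a))·log(b/a) satisfies b ≤ b + a + (a·b/(b − a))·log(b/a) ≤ 3b. -/
open Real

theorem mul_div_sub_mul_log_div_nonneg {a b : ℝ} (ha : 0 < a) (hb : 0 < b) :
    0 ≤ a * b / (b - a) * log (b / a) := by
  rcases le_total a b with hab | hba
  · exact mul_nonneg (div_nonneg (mul_pos ha hb).le (sub_nonneg.2 hab))
      (log_nonneg ((one_le_div ha).2 hab))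
  · exact mul_nonneg_of_nonpos_of_nonpos (div_nonpos_of_nonneg_of_nonpos (mul_pos ha hb).le
      (sub_nonpos.2 hba)) (log_nonpos (div_pos hb ha).le ((div_le_one ha).2 hba))

theorem mul_div_sub_mul_log_div_le {a b : ℝ} (ha : 0 < a) (hab : a < b) :
    a * b / (b - a) * log (b / a) ≤ b :=
  calc a * b / (b - a) * log (b / a)
      ≤ a * b / (b - a) * (b / a - 1) := by
        gcongr
        · exact div_nonneg (mul_pos ha (ha.trans hab)).le (sub_pos.2 hab).le
        · exact log_le_sub_one_of_pos (div_pos (ha.trans hab) ha)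
    _ = b := by
        field_simp [(sub_pos.2 hab).ne']

theorem stmt_1 (a b : ℝ) (ha : 0 < a) (hab : a < b) :
    b ≤ b + a + (a * b / (b - a)) * Real.log (b / a) ∧
    b + a + (a * b / (b - a)) * Real.log (b / a) ≤ 3 * b := by
  have hlog_nonneg := mul_div_sub_mul_log_div_nonneg ha (ha.trans hab)
  have hlog_le := mul_div_sub_mul_log_div_le ha hab
  constructor <;> linarith
end

section
/- For any two unit vectors s, t ∈ S¹, the rotation numbers ρ_s and ρ_t on the universal cover of Sp(2,ℝ) satisfy |ρ_s(Φ) − ρ_t(Φ)| ≤ 1 for all Φ. -/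
/-!
Since `det Φ(u) = 1`, the wedge product `Φ(u)s ∧ Φ(u)t = s ∧ t` does not depend on `u`. Writing
`Φ(u)s` and `Φ(u)t` in polar form through the two lifts, it equals `|Φ(u)s| |Φ(u)t| sin w(u)` with
`w(u) = δ + 2π(θ_t(u) - θ_s(u))` and `δ` the angle from `s` to `t`. So `sin ∘ w` vanishes either
everywhere or nowhere on `[0, 1]`. Every interval of length `π` contains both a zero and a
non-zero of `sin`, so by the intermediate value theorem `|w(1) - w(0)| < π`, that is,
`|ρ_s(Φ) - ρ_t(Φ)| < 1/2`.
-/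

/-- Rotation by angle `x` as a `2 × 2` matrix. -/
noncomputable def rotMat (x : ℝ) : Matrix (Fin 2) (Fin 2) ℝ :=
  !![Real.cos x, -Real.sin x; Real.sin x, Real.cos x]

/-- Euclidean norm of a vector in `ℝ²`. -/
noncomputable def vnorm (v : Fin 2 → ℝ) : ℝ := Real.sqrt (v 0 ^ 2 + v 1 ^ 2)

/-- A path in `Sp(2,ℝ) = SL(2,ℝ)` starting at the identity, representing an element of
the universal cover of `Sp(2,ℝ)`. -/
def IsSpPath (Φ : ℝ → Matrix (Fin 2) (Fin 2) ℝ) : Prop :=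
  ContinuousOn Φ (Set.Icc 0 1) ∧ Φ 0 = 1 ∧ ∀ t ∈ Set.Icc (0:ℝ) 1, (Φ t).det = 1

/-- `θ` is the lift, via the covering `ℝ → S¹`, `θ ↦ e^{2πiθ}·s`, of the circle-valued map
`t ↦ Φ(t)s/|Φ(t)s|`, normalized by `θ(0) = 0`.  In particular `θ(1) = ρ_s(Φ)` is the
rotation number of `Φ` relative to the unit vector `s`. -/
def IsRotLift (Φ : ℝ → Matrix (Fin 2) (Fin 2) ℝ) (s : Fin 2 → ℝ) (θ : ℝ → ℝ) : Prop :=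
  ContinuousOn θ (Set.Icc 0 1) ∧ θ 0 = 0 ∧ ∀ t ∈ Set.Icc (0:ℝ) 1,
    (Φ t).mulVec s = vnorm ((Φ t).mulVec s) • (rotMat (2 * Real.pi * θ t)).mulVec s

open Real Set Matrix

def wedge (v w : Fin 2 → ℝ) : ℝ := v 0 * w 1 - v 1 * w 0

lemma wedge_mulVec (A : Matrix (Fin 2) (Fin 2) ℝ) (v w : Fin 2 → ℝ) :
    wedge (A *ᵥ v) (A *ᵥ w) = A.det * wedge v w := by
  simp only [wedge, mulVec, dotProduct, Fin.sum_univ_two, det_fin_two]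
  ring

lemma wedge_smul_smul (a b : ℝ) (v w : Fin 2 → ℝ) :
    wedge (a • v) (b • w) = a * b * wedge v w := by
  simp only [wedge, Pi.smul_apply, smul_eq_mul]
  ring

lemma wedge_rotMat_mulVec (a b : ℝ) (v w : Fin 2 → ℝ) :
    wedge (rotMat a *ᵥ v) (rotMat b *ᵥ w) = wedge v w * cos (b - a) + v ⬝ᵥ w * sin (b - a) := by
  rw [cos_sub, sin_sub]
  simp only [wedge, mulVec, dotProduct, rotMat, of_apply, cons_val', cons_val_fin_one,
    cons_val_zero, Fin.sum_univ_two, cons_val_one]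
  ring

lemma vnorm_sq (v : Fin 2 → ℝ) : vnorm v ^ 2 = v 0 ^ 2 + v 1 ^ 2 :=
  sq_sqrt (by positivity)

lemma vnorm_pos {v : Fin 2 → ℝ} (hv : v ≠ 0) : 0 < vnorm v := by
  refine sqrt_pos.2 (lt_of_le_of_ne (by positivity) fun h => hv ?_)
  have h0 : v 0 = 0 := by nlinarith [sq_nonneg (v 0), sq_nonneg (v 1)]
  have h1 : v 1 = 0 := by nlinarith [sq_nonneg (v 0), sq_nonneg (v 1)]
  ext i
  fin_cases i <;> assumption

lemma vnorm_mulVec_pos {A : Matrix (Fin 2) (Fin 2) ℝ} (hA : A.det ≠ 0) {v : Fin 2 → ℝ}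
    (hv : v ≠ 0) : 0 < vnorm (A *ᵥ v) :=
  vnorm_pos fun h => hv (eq_zero_of_mulVec_eq_zero hA h)

lemma ne_zero_of_vnorm_eq_one {v : Fin 2 → ℝ} (hv : vnorm v = 1) : v ≠ 0 := by
  rintro rfl
  simp [vnorm] at hv

lemma exists_angle_of_vnorm_eq_one {v w : Fin 2 → ℝ} (hv : vnorm v = 1) (hw : vnorm w = 1) :
    ∃ δ, cos δ = v ⬝ᵥ w ∧ sin δ = wedge v w := by
  set z : ℂ := ⟨v ⬝ᵥ w, wedge v w⟩
  -- Lagrange's identity `(v ⬝ w)² + (v ∧ w)² = |v|² |w|²`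
  have hz : ‖z‖ = 1 := by
    have hsq : Complex.normSq z = (vnorm v * vnorm w) ^ 2 := by
      rw [mul_pow, vnorm_sq, vnorm_sq, Complex.normSq_mk]
      simp only [wedge, dotProduct, Fin.sum_univ_two]
      ring
    rw [Complex.norm_def, hsq, hv, hw, mul_one, one_pow, sqrt_one]
  refine ⟨z.arg, ?_, ?_⟩
  · simpa only [hz, one_mul] using Complex.norm_mul_cos_arg z
  · simpa only [hz, one_mul] using Complex.norm_mul_sin_arg z

lemma vnorm_mul_vnorm_mul_sin_eq_wedge {A : Matrix (Fin 2) (Fin 2) ℝ} (hA : A.det = 1)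
    {v w : Fin 2 → ℝ} {δ α β : ℝ} (hcos : cos δ = v ⬝ᵥ w) (hsin : sin δ = wedge v w)
    (hv : A *ᵥ v = vnorm (A *ᵥ v) • (rotMat α *ᵥ v))
    (hw : A *ᵥ w = vnorm (A *ᵥ w) • (rotMat β *ᵥ w)) :
    vnorm (A *ᵥ v) * vnorm (A *ᵥ w) * sin (δ + (β - α)) = wedge v w :=
  calc _ = vnorm (A *ᵥ v) * vnorm (A *ᵥ w) * wedge (rotMat α *ᵥ v) (rotMat β *ᵥ w) := by
          rw [wedge_rotMat_mulVec, sin_add, hcos, hsin]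
    _ = wedge (A *ᵥ v) (A *ᵥ w) := by rw [← wedge_smul_smul, ← hv, ← hw]
    _ = wedge v w := by rw [wedge_mulVec, hA, one_mul]

lemma exists_int_mul_pi_mem_Icc (x : ℝ) : ∃ k : ℤ, k * π ∈ Icc x (x + π) := by
  refine ⟨⌈x / π⌉, (div_le_iff₀ pi_pos).1 (Int.le_ceil _), ?_⟩
  have h := (lt_div_iff₀ pi_pos).1 (sub_lt_iff_lt_add.2 (Int.ceil_lt_add_one (x / π)))
  linarith

lemma abs_sub_lt_pi_of_mul_sin_eq_const {w g : ℝ → ℝ} {a b c : ℝ} (hab : a ≤ b)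
    (hw : ContinuousOn w (Icc a b)) (hg : ∀ u ∈ Icc a b, 0 < g u)
    (hc : ∀ u ∈ Icc a b, g u * sin (w u) = c) : |w b - w a| < π := by
  by_contra! hπ
  set m := min (w a) (w b)
  have hsub : Icc m (m + π) ⊆ w '' Icc a b :=
    calc Icc m (m + π) ⊆ uIcc (w a) (w b) := by
          rw [← Icc_min_max]
          exact Icc_subset_Icc le_rfl (by linarith [max_sub_min_eq_abs (w a) (w b)])
      _ ⊆ w '' uIcc a b := intermediate_value_uIcc (by rwa [uIcc_of_le hab])
      _ = w '' Icc a b := by rw [uIcc_of_le hab]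
  obtain ⟨k, hk⟩ := exists_int_mul_pi_mem_Icc m
  obtain ⟨u, hu, hwu⟩ := hsub hk
  have hc0 : c = 0 := by rw [← hc u hu, hwu, sin_int_mul_pi, mul_zero]
  -- `sin` cannot vanish at both `m` and `m + π / 2`, since `sin (m + π / 2) = cos m`
  obtain ⟨x, hx, hsx⟩ : ∃ x ∈ Icc m (m + π), sin x ≠ 0 := by
    by_cases hm : sin m = 0
    · refine ⟨m + π / 2, ⟨by linarith [pi_pos], by linarith [pi_pos]⟩, fun h => ?_⟩
      have := sin_sq_add_cos_sq m
      rw [hm, ← sin_add_pi_div_two, h] at this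
      norm_num at this
    · exact ⟨m, ⟨le_rfl, by linarith [pi_pos]⟩, hm⟩
  obtain ⟨v, hv, rfl⟩ := hsub hx
  exact hsx (by simpa [hc0, (hg v hv).ne'] using hc v hv)

/-- For any two unit vectors `s, t ∈ S¹`, the rotation numbers relative to `s` and `t`
differ by at most `1`: `|ρ_s(Φ) − ρ_t(Φ)| ≤ 1`. -/
theorem stmt_7 (Φ : ℝ → Matrix (Fin 2) (Fin 2) ℝ) (hΦ : IsSpPath Φ)
    (s t : Fin 2 → ℝ) (hs : vnorm s = 1) (ht : vnorm t = 1)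
    (θs θt : ℝ → ℝ) (h1 : IsRotLift Φ s θs) (h2 : IsRotLift Φ t θt) :
    |θs 1 - θt 1| ≤ 1 := by
  obtain ⟨-, -, hdet⟩ := hΦ
  obtain ⟨hθs, hθs0, hΦs⟩ := h1
  obtain ⟨hθt, hθt0, hΦt⟩ := h2
  obtain ⟨δ, hcos, hsin⟩ := exists_angle_of_vnorm_eq_one hs ht
  set w : ℝ → ℝ := fun u => δ + (2 * π * θt u - 2 * π * θs u)
  have hw : |w 1 - w 0| < π := by
    refine abs_sub_lt_pi_of_mul_sin_eq_const zero_le_one (by fun_prop)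
      (g := fun u => vnorm (Φ u *ᵥ s) * vnorm (Φ u *ᵥ t)) (fun u hu => ?_)
      (fun u hu => vnorm_mul_vnorm_mul_sin_eq_wedge (hdet u hu) hcos hsin (hΦs u hu) (hΦt u hu))
    have hdet₀ : (Φ u).det ≠ 0 := by simp [hdet u hu]
    exact mul_pos (vnorm_mulVec_pos hdet₀ (ne_zero_of_vnorm_eq_one hs))
      (vnorm_mulVec_pos hdet₀ (ne_zero_of_vnorm_eq_one ht))
  have hw10 : w 1 - w 0 = 2 * π * (θt 1 - θs 1) := by simp only [w, hθs0, hθt0]; ring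
  rw [hw10, abs_mul, abs_of_pos two_pi_pos, abs_sub_comm] at hw
  nlinarith [pi_pos]
end

section
/- Let γ : [0,∞) → ℝⁿ be a twice continuously differentiable curve with |γ̇(t)| = 1 for all t and with image contained in a set of diameter D > 0. Then for every constant 0 < C < 1 and all T with T > C·T + 2D, one has (1/T)·∫₀ᵀ |γ̈(t)| dt ≥ C/D. -/
/-!
Pair the position `γ t - γ 0` with the velocity. Integrating by parts,
`∫₀ᵀ |γ̇|² = ⟨γ T - γ 0, γ̇ T⟩ - ∫₀ᵀ ⟨γ t - γ 0, γ̈ t⟩`, and for a unit-speed curve that stays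
within distance `D` of its starting point the left side is `T` while the right side is at most
`D + D ∫₀ᵀ |γ̈|`. Hence `T - D ≤ D ∫₀ᵀ |γ̈|`, which beats `C T` once `T > C T + 2D`.
-/

open intervalIntegral Metric Set

section InnerProductSpace

variable {E : Type*} [NormedAddCommGroup E] [InnerProductSpace ℝ E]

local notation "⟪" x ", " y "⟫" => inner ℝ x y

theorem integral_inner_sub_deriv_deriv {γ : ℝ → E} (hγ : ContDiff ℝ 2 γ) (a b : ℝ) :
    ∫ t in a..b, ⟪γ t - γ a, deriv (deriv γ) t⟫ =
      ⟪γ b - γ a, deriv γ b⟫ - ∫ t in a..b, ‖deriv γ t‖ ^ 2 := by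
  have hγ' : ContDiff ℝ 1 (deriv γ) := hγ.iterate_deriv' 1 1
  have hγc : Continuous γ := hγ.continuous
  have hγ'c : Continuous (deriv γ) := hγ'.continuous
  have hγ''c : Continuous (deriv (deriv γ)) := hγ'.continuous_deriv le_rfl
  have hderiv : ∀ t ∈ uIcc a b, HasDerivAt (fun s => ⟪γ s - γ a, deriv γ s⟫)
      (⟪γ t - γ a, deriv (deriv γ) t⟫ + ‖deriv γ t‖ ^ 2) t := fun t _ => by
    rw [← real_inner_self_eq_norm_sq]
    exact ((hγ.differentiable two_ne_zero t).hasDerivAt.sub_const _).inner ℝ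
      (hγ'.differentiable one_ne_zero t).hasDerivAt
  have hint₁ :
      IntervalIntegrable (fun t => ⟪γ t - γ a, deriv (deriv γ) t⟫) MeasureTheory.volume a b :=
    ((hγc.sub continuous_const).inner hγ''c).intervalIntegrable a b
  have hint₂ : IntervalIntegrable (fun t => ‖deriv γ t‖ ^ 2) MeasureTheory.volume a b :=
    (hγ'c.norm.pow 2).intervalIntegrable a b
  have hFTC := integral_eq_sub_of_hasDerivAt hderiv (hint₁.add hint₂)
  rw [integral_add hint₁ hint₂] at hFTC
  simp only [sub_self, inner_zero_left, sub_zero] at hFTC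
  linarith

theorem le_add_mul_integral_norm_deriv_deriv {γ : ℝ → E} (hγ : ContDiff ℝ 2 γ) {T D : ℝ}
    (hT : 0 ≤ T) (hspeed : ∀ t ∈ Icc 0 T, ‖deriv γ t‖ = 1)
    (hdist : ∀ t ∈ Icc 0 T, ‖γ t - γ 0‖ ≤ D) :
    T ≤ D + D * ∫ t in (0 : ℝ)..T, ‖deriv (deriv γ) t‖ := by
  have hγ''c : Continuous (deriv (deriv γ)) :=
    (hγ.iterate_deriv' 1 1).continuous_deriv le_rfl
  have hT_eq : ∫ t in (0 : ℝ)..T, ‖deriv γ t‖ ^ 2 = T := by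
    rw [integral_congr (g := fun _ => (1 : ℝ)) fun t ht => by
      simp only [hspeed t (uIcc_of_le hT ▸ ht), one_pow]]
    simp
  have hendpoint : ⟪γ T - γ 0, deriv γ T⟫ ≤ D :=
    calc ⟪γ T - γ 0, deriv γ T⟫ ≤ ‖γ T - γ 0‖ * ‖deriv γ T‖ := real_inner_le_norm _ _
      _ ≤ D := by rw [hspeed T ⟨hT, le_rfl⟩, mul_one]; exact hdist T ⟨hT, le_rfl⟩
  have hcurv : ‖∫ t in (0 : ℝ)..T, ⟪γ t - γ 0, deriv (deriv γ) t⟫‖ ≤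
      ∫ t in (0 : ℝ)..T, D * ‖deriv (deriv γ) t‖ := by
    refine norm_integral_le_of_norm_le hT (Filter.Eventually.of_forall fun t ht => ?_)
      ((continuous_const.mul hγ''c.norm).intervalIntegrable 0 T)
    calc ‖⟪γ t - γ 0, deriv (deriv γ) t⟫‖ ≤ ‖γ t - γ 0‖ * ‖deriv (deriv γ) t‖ :=
          norm_inner_le_norm _ _
      _ ≤ D * ‖deriv (deriv γ) t‖ :=
          mul_le_mul_of_nonneg_right (hdist t (Ioc_subset_Icc_self ht)) (norm_nonneg _)
  rw [intervalIntegral.integral_const_mul, Real.norm_eq_abs, abs_le] at hcurv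
  have hparts := integral_inner_sub_deriv_deriv hγ 0 T
  rw [hT_eq] at hparts
  linarith [hcurv.1]

end InnerProductSpace

/-- A unit-speed `C²` curve confined to a set of diameter `D` has time-averaged
acceleration at least `C/D` for every `0 < C < 1` and all sufficiently large times `T`
(namely those with `T > C·T + 2D`). -/
theorem stmt_11 (n : ℕ) (γ : ℝ → EuclideanSpace ℝ (Fin n))
    (hγ : ContDiff ℝ 2 γ)
    (hspeed : ∀ t : ℝ, 0 ≤ t → ‖deriv γ t‖ = 1)
    (S : Set (EuclideanSpace ℝ (Fin n))) (D : ℝ) (hD : 0 < D)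
    (hmem : ∀ t : ℝ, 0 ≤ t → γ t ∈ S) (hdiam : Metric.diam S = D) :
    ∀ C : ℝ, 0 < C → C < 1 → ∀ T : ℝ, C * T + 2 * D < T →
      C / D ≤ (1 / T) * ∫ t in (0:ℝ)..T, ‖deriv (deriv γ) t‖ := by
  intro C _ hC1 T hT
  have hT0 : 0 < T := by nlinarith
  have hS : Bornology.IsBounded S := by
    by_contra hS
    exact hD.ne' (hdiam.symm.trans (diam_eq_zero_of_unbounded hS))
  have hdist : ∀ t ∈ Icc 0 T, ‖γ t - γ 0‖ ≤ D := fun t ht => by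
    rw [← dist_eq_norm, ← hdiam]
    exact dist_le_diam_of_mem hS (hmem t ht.1) (hmem 0 le_rfl)
  have key := le_add_mul_integral_norm_deriv_deriv hγ hT0.le (fun t ht => hspeed t ht.1) hdist
  rw [one_div_mul_eq_div, div_le_div_iff₀ hD hT0]
  linarith
end

section
/- Let X ⊂ ℝ⁴ be a convex domain containing the ellipsoid E(a,b) = E(a) × E(b) in the splitting ℂ² = ℂ × ℂ (where E(a) ⊂ ℂ is the disk of area a), contained in 4·E(a,b), with smooth boundary Y, and let ν(x) denote the outward unit normal at x ∈ Y. If x ∈ Y satisfies π₂(x) ∈ E(3b/4), then |π₂(ν(x))| ≤ (4/(1 − (3/4)^{1/2}))·(a/b)^{1/2}, where π₂ : ℂ² → ℂ is the projection to the second factor. -/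
open scoped Pointwise RealInnerProductSpace

/-- The standard symplectic ellipsoid `E(a,b) ⊂ ℂ² ≅ ℝ⁴` in Euclidean coordinates, where
the first complex factor has coordinates `(x 0, x 1)` and the second `(x 2, x 3)`. -/
def stdEllipsoid (a b : ℝ) : Set (EuclideanSpace ℝ (Fin 4)) :=
  {x | Real.pi * (x 0 ^ 2 + x 1 ^ 2) / a + Real.pi * (x 2 ^ 2 + x 3 ^ 2) / b ≤ 1}

/-! Test the support inequality `⟪ν, w - x⟫ ≤ 0` at the point `w = (0, r u)` of `0 × ∂E(b)`,
`r = √(b/π)`, `u = π₂ν/|π₂ν|`. By Cauchy–Schwarz in each factor this gives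
`|π₂ν| (r - |π₂x|) ≤ |π₁ν| |π₁x|`; conclude with `|π₂x| ≤ √(3/4) r`, `|π₁ν| ≤ 1` and
`|π₁x| ≤ 4√(a/π)` (as `x ∈ closure X ⊆ 4·E(a,b)`). Here `π₁ = C2.fst`, `π₂ = C2.snd` and `w = C2.inr (r u)`. -/

namespace C2

abbrev E4 := EuclideanSpace ℝ (Fin 4)
abbrev E2 := EuclideanSpace ℝ (Fin 2)

def fst (x : E4) : E2 := !₂[x 0, x 1]
def snd (x : E4) : E2 := !₂[x 2, x 3]
def inr (u : E2) : E4 := !₂[0, 0, u 0, u 1]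

lemma norm_sq_eq_sq_add_sq (u : E2) : ‖u‖ ^ 2 = u 0 ^ 2 + u 1 ^ 2 := by
  simp [EuclideanSpace.norm_sq_eq, Fin.sum_univ_two]

lemma norm_fst_sq (x : E4) : ‖fst x‖ ^ 2 = x 0 ^ 2 + x 1 ^ 2 := by
  simp [fst, norm_sq_eq_sq_add_sq]

lemma norm_snd_sq (x : E4) : ‖snd x‖ ^ 2 = x 2 ^ 2 + x 3 ^ 2 := by
  simp [snd, norm_sq_eq_sq_add_sq]

lemma norm_snd (x : E4) : ‖snd x‖ = √(x 2 ^ 2 + x 3 ^ 2) := by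
  rw [← norm_snd_sq, Real.sqrt_sq (norm_nonneg _)]

lemma inner_eq_inner_fst_add_inner_snd (v w : E4) :
    ⟪v, w⟫ = ⟪fst v, fst w⟫ + ⟪snd v, snd w⟫ := by
  simp [fst, snd, PiLp.inner_apply, Fin.sum_univ_four, Fin.sum_univ_two]; ring

lemma norm_sq_eq_norm_fst_sq_add_norm_snd_sq (v : E4) :
    ‖v‖ ^ 2 = ‖fst v‖ ^ 2 + ‖snd v‖ ^ 2 := by
  simp only [← real_inner_self_eq_norm_sq, inner_eq_inner_fst_add_inner_snd]

lemma fst_smul (c : ℝ) (x : E4) : fst (c • x) = c • fst x := by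
  ext i; fin_cases i <;> simp [fst]

@[simp] lemma fst_inr (u : E2) : fst (inr u) = 0 := by
  ext i; fin_cases i <;> simp [fst, inr]

@[simp] lemma snd_inr (u : E2) : snd (inr u) = u := by
  ext i; fin_cases i <;> simp [snd, inr]

lemma mem_stdEllipsoid_iff {a b : ℝ} {x : E4} :
    x ∈ stdEllipsoid a b ↔ Real.pi * ‖fst x‖ ^ 2 / a + Real.pi * ‖snd x‖ ^ 2 / b ≤ 1 := by
  rw [norm_fst_sq, norm_snd_sq]; rfl

lemma isClosed_stdEllipsoid (a b : ℝ) : IsClosed (stdEllipsoid a b) :=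
  isClosed_le (by fun_prop) continuous_const

lemma norm_fst_le_norm (v : E4) : ‖fst v‖ ≤ ‖v‖ :=
  le_of_sq_le_sq (by nlinarith [norm_sq_eq_norm_fst_sq_add_norm_snd_sq v, sq_nonneg ‖snd v‖])
    (norm_nonneg v)

lemma norm_le_sqrt_div_pi_iff {u : E2} {c : ℝ} (hc : 0 ≤ c) :
    ‖u‖ ≤ √(c / Real.pi) ↔ Real.pi * ‖u‖ ^ 2 ≤ c := by
  rw [Real.le_sqrt (norm_nonneg u) (div_nonneg hc Real.pi_pos.le), le_div_iff₀' Real.pi_pos]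

lemma inr_mem_stdEllipsoid {a b : ℝ} (hb : 0 < b) {u : E2} (hu : ‖u‖ ≤ √(b / Real.pi)) :
    inr u ∈ stdEllipsoid a b := by
  rw [mem_stdEllipsoid_iff, fst_inr, snd_inr, norm_zero, zero_pow two_ne_zero, mul_zero,
    zero_div, zero_add, div_le_one hb]
  exact (norm_le_sqrt_div_pi_iff hb.le).1 hu

lemma pi_mul_norm_fst_sq_le {a b : ℝ} (ha : 0 < a) (hb : 0 ≤ b) {x : E4}
    (hx : x ∈ stdEllipsoid a b) : Real.pi * ‖fst x‖ ^ 2 ≤ a := by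
  rw [mem_stdEllipsoid_iff] at hx
  have : 0 ≤ Real.pi * ‖snd x‖ ^ 2 / b := by positivity
  rw [← div_le_one ha]
  linarith

lemma norm_snd_mul_sub_le {X : Set E4} {x ν : E4} (hsupp : ∀ w ∈ X, ⟪ν, w - x⟫ ≤ 0) {r : ℝ}
    (hr : 0 ≤ r) (hX : ∀ u : E2, ‖u‖ ≤ r → inr u ∈ X) :
    ‖snd ν‖ * (r - ‖snd x‖) ≤ ‖fst ν‖ * ‖fst x‖ := by
  set u : E2 := (r / ‖snd ν‖) • snd ν
  have hu : ‖u‖ ≤ r := by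
    rcases eq_or_ne ‖snd ν‖ 0 with h | h
    · simp [u, h, hr]
    · simp [u, norm_smul, abs_of_nonneg hr, h]
  have hνu : ⟪snd ν, u⟫ = ‖snd ν‖ * r := by
    rcases eq_or_ne ‖snd ν‖ 0 with h | h
    · simp [u, h]
    · simp only [u, inner_smul_right, real_inner_self_eq_norm_sq]; field_simp
  have hsupp_u := hsupp _ (hX u hu)
  rw [inner_sub_right, inner_eq_inner_fst_add_inner_snd ν (inr u), fst_inr, snd_inr,
    inner_zero_right, hνu, inner_eq_inner_fst_add_inner_snd] at hsupp_u
  nlinarith [real_inner_le_norm (fst ν) (fst x), real_inner_le_norm (snd ν) (snd x)]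

end C2

open C2 in
theorem stmt_17_general (X : Set (EuclideanSpace ℝ (Fin 4)))
    (a b : ℝ) (ha : 0 < a) (hab : a ≤ b)
    (h1 : stdEllipsoid a b ⊆ X) (h2 : X ⊆ (4:ℝ) • stdEllipsoid a b)
    (x : EuclideanSpace ℝ (Fin 4)) (hx : x ∈ frontier X)
    (hx2 : Real.pi * (x 2 ^ 2 + x 3 ^ 2) ≤ 3 * b / 4)
    (ν : EuclideanSpace ℝ (Fin 4)) (hν : ‖ν‖ = 1)
    (hsupp : ∀ w ∈ X, ⟪ν, w - x⟫ ≤ 0) :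
    Real.sqrt (ν 2 ^ 2 + ν 3 ^ 2) ≤
      (4 / (1 - Real.sqrt (3/4))) * Real.sqrt (a / b) := by
  have hb : 0 < b := ha.trans_le hab
  set r := √(b / Real.pi)
  have hr : 0 < r := Real.sqrt_pos.2 (div_pos hb Real.pi_pos)
  have key := norm_snd_mul_sub_le hsupp hr.le fun u hu ↦ h1 (inr_mem_stdEllipsoid hb hu)
  have hx4 : x ∈ (4:ℝ) • stdEllipsoid a b :=
    closure_minimal h2 ((isClosed_stdEllipsoid a b).smul_of_ne_zero four_ne_zero)
      (frontier_subset_closure hx)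
  have hfst : ‖fst x‖ ≤ 4 * (√(a / b) * r) := by
    obtain ⟨y, hy, rfl⟩ := hx4
    rw [fst_smul, norm_smul, Real.norm_of_nonneg zero_le_four, ← Real.sqrt_mul (div_pos ha hb).le,
      div_mul_div_cancel₀ hb.ne']
    gcongr
    exact (norm_le_sqrt_div_pi_iff ha.le).2 (pi_mul_norm_fst_sq_le ha hb.le hy)
  have hsnd : ‖snd x‖ ≤ √(3/4) * r := by
    rw [← Real.sqrt_mul (by norm_num), ← mul_div_assoc, norm_le_sqrt_div_pi_iff (by positivity),
      norm_snd_sq]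
    linarith
  have hν₁ : ‖fst ν‖ ≤ 1 := hν ▸ norm_fst_le_norm ν
  have hs : √(3/4) < 1 := by
    rw [Real.sqrt_lt' one_pos]; norm_num
  rw [← norm_snd, div_mul_eq_mul_div, le_div_iff₀ (by linarith)]
  refine le_of_mul_le_mul_right ?_ hr
  calc ‖snd ν‖ * (1 - √(3/4)) * r = ‖snd ν‖ * (r - √(3/4) * r) := by ring
    _ ≤ ‖snd ν‖ * (r - ‖snd x‖) := by gcongr
    _ ≤ ‖fst ν‖ * ‖fst x‖ := key
    _ ≤ 1 * (4 * (√(a / b) * r)) := by gcongr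
    _ = 4 * √(a / b) * r := by ring

/-- If `X` is convex with `E(a,b) ⊆ X ⊆ 4·E(a,b)`, `x` is a boundary point of `X` whose
second complex coordinate lies in `E(3b/4)` (i.e. `π|π₂(x)|² ≤ 3b/4`), and `ν` is the
outward unit normal to `∂X` at `x` (so `⟨ν, w − x⟩ ≤ 0` for all `w ∈ X`), then
`|π₂(ν)| ≤ (4/(1 − (3/4)^{1/2}))·(a/b)^{1/2}`. -/
theorem stmt_17 (X : Set (EuclideanSpace ℝ (Fin 4))) (hX : Convex ℝ X)
    (a b : ℝ) (ha : 0 < a) (hab : a ≤ b)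
    (h1 : stdEllipsoid a b ⊆ X) (h2 : X ⊆ (4:ℝ) • stdEllipsoid a b)
    (x : EuclideanSpace ℝ (Fin 4)) (hx : x ∈ frontier X)
    (hx2 : Real.pi * (x 2 ^ 2 + x 3 ^ 2) ≤ 3 * b / 4)
    (ν : EuclideanSpace ℝ (Fin 4)) (hν : ‖ν‖ = 1)
    (hsupp : ∀ w ∈ X, ⟪ν, w - x⟫ ≤ 0) :
    Real.sqrt (ν 2 ^ 2 + ν 3 ^ 2) ≤
      (4 / (1 - Real.sqrt (3/4))) * Real.sqrt (a / b) :=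
  stmt_17_general X a b ha hab h1 h2 x hx hx2 ν hν hsupp
end
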